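/- arXiv:2205.13950 — 5 statements merged into one kernel-verified Lean document; each statement's English description precedes it below -/
import Mathlib

section
/- For any Markovian policy with parameter q = π(a1|s) ∈ [0,1) on the single-state looping MDP with γ = 1, the occupancy satisfies μ_1^π(s,a1) = q/(1−q) and μ_1^π(s,a2) = 1. Consequently, no Markovian policy achieves the occupancy pair (μ(s,a1), μ(s,a2)) = (∞, 1/2), which is the occupancy of the non-Markovian policy that plays a1 or a2 uniformly at t=0 and a1 deterministically thereafter. -/
open scoped ENNReal

/-!
Summing the geometric series gives `∑ₜ qᵗ (1 - q) = (1 - q)⁻¹ (1 - q)`, which is `1` for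
`q < 1` and `∞ · 0 = 0` for `q ≥ 1`. So the `a2`-occupancy of a Markovian policy is never `1/2`.
-/

namespace ENNReal

theorem tsum_pow_succ (q : ℝ≥0∞) : ∑' t : ℕ, q ^ (t + 1) = q / (1 - q) := by
  simp_rw [pow_succ', ENNReal.tsum_mul_left, ENNReal.tsum_geometric, div_eq_mul_inv]

theorem tsum_pow_mul_one_sub_of_lt_one {q : ℝ≥0∞} (hq : q < 1) :
    ∑' t : ℕ, q ^ t * (1 - q) = 1 := by
  rw [ENNReal.tsum_mul_right, ENNReal.tsum_geometric,
    ENNReal.inv_mul_cancel (tsub_pos_of_lt hq).ne' (sub_ne_top one_ne_top)]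

theorem tsum_pow_mul_one_sub_of_one_le {q : ℝ≥0∞} (hq : 1 ≤ q) :
    ∑' t : ℕ, q ^ t * (1 - q) = 0 := by
  simp [tsub_eq_zero_of_le hq]

end ENNReal

theorem no_markovian_policy_matches_sigma_infinite_occupancy :
    (∀ q : ℝ≥0∞, q < 1 →
      (∑' t : ℕ, q ^ (t + 1)) = q / (1 - q) ∧
      (∑' t : ℕ, q ^ t * (1 - q)) = 1) ∧
    ¬ ∃ q : ℝ≥0∞, q ≤ 1 ∧
      (∑' t : ℕ, q ^ (t + 1)) = ⊤ ∧ (∑' t : ℕ, q ^ t * (1 - q)) = 1 / 2 := by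
  refine ⟨fun q hq => ⟨ENNReal.tsum_pow_succ q, ENNReal.tsum_pow_mul_one_sub_of_lt_one hq⟩, ?_⟩
  rintro ⟨q, -, -, h_half⟩
  rcases lt_or_ge q 1 with hq | hq
  · rw [ENNReal.tsum_pow_mul_one_sub_of_lt_one hq] at h_half
    exact absurd h_half.symm (by norm_num)
  · rw [ENNReal.tsum_pow_mul_one_sub_of_one_le hq] at h_half
    exact absurd h_half.symm (by simp)
end

section
/- (State-action occupancy equivalence, finite case) Let m be an MDP with finite state and action spaces and discount γ < 1, and let π be any (possibly non-Markovian) policy. Define the Markovian policy π̃(a|s) = μ_γ^π(s,a)/μ_γ^π(s) for states s with μ_γ^π(s) > 0 (arbitrary otherwise). Then μ_γ^{π̃}(s,a) = μ_γ^π(s,a) for all state-action pairs (s,a). -/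
/-!
State-action occupancy equivalence, finite case.

An MDP with finite state space `S` and action space `A`, initial distribution `p0`,
transition kernel `p`, and discount factor `γ < 1`. A (possibly non-Markovian) policy
maps a finite history (the past state-action pairs) and the current state to a
distribution over actions. The occupancy `occ γ p0 p π s a` is
`E[∑ₜ γ^t 1(Sₜ = s, Aₜ = a)]`, computed by summing path probabilities over all
trajectory prefixes. The Markovian policy `π̃(a|s) = μ(s,a)/μ(s)` has the same
occupancy as `π`.
-/

open Finset
open scoped ENNReal

/-- The history (of past state-action pairs) seen at step `i` of a trajectory
prefix `w`. -/
def hist {S A : Type*} {t : ℕ} (w : Fin (t + 1) → S × A) (i : Fin (t + 1)) :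
    Fin i.1 → S × A :=
  fun j => w ⟨j.1, lt_trans j.2 i.2⟩

/-- Probability of a trajectory prefix `w = ((S₀,A₀),…,(Sₜ,Aₜ))` under initial
distribution `p0`, transition kernel `p` and history-dependent policy `π`. -/
noncomputable def pathProb {S A : Type*} [Fintype S] [Fintype A]
    (p0 : S → ℝ≥0∞) (p : S × A → S → ℝ≥0∞)
    (π : (t : ℕ) → (Fin t → S × A) → S → A → ℝ≥0∞)
    (t : ℕ) (w : Fin (t + 1) → S × A) : ℝ≥0∞ :=
  p0 (w 0).1 * (∏ i : Fin (t + 1), π i.1 (hist w i) (w i).1 (w i).2) *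
    ∏ i : Fin t, p (w i.castSucc) (w i.succ).1

/-- Discounted occupancy `μ_γ^π(s,a) = E[∑ₜ γ^t 1(Sₜ = s, Aₜ = a)]`. -/
noncomputable def occ {S A : Type*} [Fintype S] [Fintype A] [DecidableEq S] [DecidableEq A]
    (γ : ℝ≥0∞) (p0 : S → ℝ≥0∞) (p : S × A → S → ℝ≥0∞)
    (π : (t : ℕ) → (Fin t → S × A) → S → A → ℝ≥0∞) (s : S) (a : A) : ℝ≥0∞ :=
  ∑' t : ℕ, γ ^ t * ∑ w : Fin (t + 1) → S × A,
    (if w (Fin.last t) = (s, a) then pathProb p0 p π t w else 0)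

/-- A Markovian policy, viewed as a history-dependent policy ignoring the history. -/
def liftMk {S A : Type*} (πm : S → A → ℝ≥0∞) :
    (t : ℕ) → (Fin t → S × A) → S → A → ℝ≥0∞ :=
  fun _ _ s a => πm s a

set_option linter.unusedSectionVars false

section
variable {S A : Type*} [Fintype S] [Fintype A]

def snocEquiv' (X : Type*) (n : ℕ) : ((Fin n → X) × X) ≃ (Fin (n + 1) → X) where
  toFun wx := Fin.snoc wx.1 wx.2
  invFun f := (Fin.init f, f (Fin.last n))
  left_inv := fun ⟨w, x⟩ => by simp
  right_inv := fun f => Fin.snoc_init_self f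

lemma sum_snoc {X M : Type*} [Fintype X] [AddCommMonoid M] (n : ℕ)
    (F : (Fin (n + 1) → X) → M) :
    ∑ w, F w = ∑ w : Fin n → X, ∑ x : X, F (Fin.snoc w x) := by
  rw [← Equiv.sum_comp (snocEquiv' X n) F, Fintype.sum_prod_type]
  rfl

lemma hist_snoc_castSucc {t : ℕ} (w : Fin (t + 1) → S × A) (x : S × A) (i : Fin (t + 1)) :
    hist (Fin.snoc w x) i.castSucc = hist w i := by
  funext j
  exact Fin.snoc_castSucc (α := fun _ : Fin (t+2) => S × A) x w ⟨j.1, lt_trans j.2 i.2⟩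

lemma hist_snoc_last {t : ℕ} (w : Fin (t + 1) → S × A) (x : S × A) :
    hist (Fin.snoc w x) (Fin.last (t + 1)) = w := by
  funext j
  exact Fin.snoc_castSucc (α := fun _ : Fin (t+2) => S × A) x w j

set_option linter.unusedSectionVars false
lemma pathProb_snoc (p0 : S → ℝ≥0∞) (p : S × A → S → ℝ≥0∞)
    (π : (t : ℕ) → (Fin t → S × A) → S → A → ℝ≥0∞)
    (t : ℕ) (w : Fin (t + 1) → S × A) (x : S × A) :
    pathProb p0 p π (t + 1) (Fin.snoc w x : Fin (t + 2) → S × A)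
      = pathProb p0 p π t w * π (t + 1) w x.1 x.2 * p (w (Fin.last t)) x.1 := by
  unfold pathProb
  have e1 : (∏ i : Fin (t+2),
        π i.1 (hist (Fin.snoc w x : Fin (t + 2) → S × A) i) ((Fin.snoc w x : Fin (t + 2) → S × A) i).1 ((Fin.snoc w x : Fin (t + 2) → S × A) i).2)
      = (∏ i : Fin (t+1), π i.castSucc.1 (hist (Fin.snoc w x : Fin (t + 2) → S × A) i.castSucc)
          ((Fin.snoc w x : Fin (t + 2) → S × A) i.castSucc).1 ((Fin.snoc w x : Fin (t + 2) → S × A) i.castSucc).2)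
        * π (Fin.last (t+1)).1 (hist (Fin.snoc w x : Fin (t + 2) → S × A) (Fin.last (t+1)))
            ((Fin.snoc w x : Fin (t + 2) → S × A) (Fin.last (t+1))).1 ((Fin.snoc w x : Fin (t + 2) → S × A) (Fin.last (t+1))).2 :=
    Fin.prod_univ_castSucc _
  have e2 : (∏ i : Fin (t+1), p ((Fin.snoc w x : Fin (t + 2) → S × A) i.castSucc) ((Fin.snoc w x : Fin (t + 2) → S × A) i.succ).1)
      = (∏ i : Fin t, p ((Fin.snoc w x : Fin (t + 2) → S × A) i.castSucc.castSucc)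
            ((Fin.snoc w x : Fin (t + 2) → S × A) i.castSucc.succ).1)
        * p ((Fin.snoc w x : Fin (t + 2) → S × A) (Fin.last t).castSucc) ((Fin.snoc w x : Fin (t + 2) → S × A) (Fin.last t).succ).1 :=
    Fin.prod_univ_castSucc _
  rw [e1, e2]
  have h0 : (Fin.snoc w x : Fin (t+2) → S × A) 0 = w 0 := by
    rw [show (0 : Fin (t+2)) = Fin.castSucc 0 from rfl, Fin.snoc_castSucc]
  have h1 : ∀ i : Fin (t+1),
      π i.castSucc.1 (hist (Fin.snoc w x : Fin (t + 2) → S × A) i.castSucc) ((Fin.snoc w x : Fin (t + 2) → S × A) i.castSucc).1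
        ((Fin.snoc w x : Fin (t + 2) → S × A) i.castSucc).2 = π i.1 (hist w i) (w i).1 (w i).2 := by
    intro i
    rw [hist_snoc_castSucc, Fin.snoc_castSucc]
    rfl
  have h2 : ∀ i : Fin t,
      p ((Fin.snoc w x : Fin (t + 2) → S × A) i.castSucc.castSucc) ((Fin.snoc w x : Fin (t + 2) → S × A) i.castSucc.succ).1
        = p (w i.castSucc) (w i.succ).1 := by
    intro i
    rw [Fin.snoc_castSucc, Fin.succ_castSucc, Fin.snoc_castSucc]
  have h3 : π (Fin.last (t+1)).1 (hist (Fin.snoc w x : Fin (t + 2) → S × A) (Fin.last (t+1)))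
      ((Fin.snoc w x : Fin (t + 2) → S × A) (Fin.last (t+1))).1 ((Fin.snoc w x : Fin (t + 2) → S × A) (Fin.last (t+1))).2
      = π (t+1) w x.1 x.2 := by
    rw [hist_snoc_last, Fin.snoc_last]
    rfl
  have h4 : p ((Fin.snoc w x : Fin (t + 2) → S × A) (Fin.last t).castSucc) ((Fin.snoc w x : Fin (t + 2) → S × A) (Fin.last t).succ).1
      = p (w (Fin.last t)) x.1 := by
    rw [Fin.snoc_castSucc, Fin.succ_last, Fin.snoc_last]
  rw [h0, h3, h4, Finset.prod_congr rfl (fun i _ => h1 i),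
      Finset.prod_congr rfl (fun i _ => h2 i)]
  ring
end

section qq
variable {S A : Type*} [Fintype S] [Fintype A] [DecidableEq S] [DecidableEq A]
variable (p0 : S → ℝ≥0∞) (p : S × A → S → ℝ≥0∞)
  (π : (t : ℕ) → (Fin t → S × A) → S → A → ℝ≥0∞)

/-- time-`t` state-action distribution -/
noncomputable def qq (t : ℕ) (x : S × A) : ℝ≥0∞ :=
  ∑ w : Fin (t + 1) → S × A, if w (Fin.last t) = x then pathProb p0 p π t w else 0

lemma occ_eq_tsum (γ : ℝ≥0∞) (s : S) (a : A) :
    occ γ p0 p π s a = ∑' t : ℕ, γ ^ t * qq p0 p π t (s, a) := rfl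

lemma qq_zero (x : S × A) :
    qq p0 p π 0 x = p0 x.1 * π 0 (fun i => i.elim0) x.1 x.2 := by
  unfold qq pathProb
  rw [← Equiv.sum_comp (Equiv.funUnique (Fin 1) (S × A)).symm]
  have hh : ∀ y : S × A,
      (fun w : Fin 1 → S × A => if w (Fin.last 0) = x then
        (p0 (w 0).1 * ∏ i : Fin 1, π i.1 (hist w i) (w i).1 (w i).2) *
          ∏ i : Fin 0, p (w i.castSucc) (w i.succ).1 else 0)
        ((Equiv.funUnique (Fin 1) (S × A)).symm y)
      = if y = x then p0 y.1 * π 0 (fun i => i.elim0) y.1 y.2 else 0 := by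
    intro y
    have : (Equiv.funUnique (Fin 1) (S × A)).symm y = fun _ => y := rfl
    rw [this]
    simp only [Fin.prod_univ_one, Fin.prod_univ_zero, mul_one]
    congr 1
    have : hist (fun _ : Fin 1 => y) 0 = (fun i : Fin 0 => i.elim0) :=
      funext fun i => i.elim0
    rw [this]
    rfl
  rw [Finset.sum_congr rfl (fun y _ => hh y), Finset.sum_ite_eq']
  simp

lemma qq_succ (t : ℕ) (s : S) (a : A) :
    qq p0 p π (t + 1) (s, a)
      = ∑ w : Fin (t + 1) → S × A,
          pathProb p0 p π t w * π (t + 1) w s a * p (w (Fin.last t)) s := by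
  unfold qq
  rw [sum_snoc]
  refine Finset.sum_congr rfl fun w _ => ?_
  have h : ∀ x : S × A,
      (if (Fin.snoc w x : Fin (t + 2) → S × A) (Fin.last (t + 1)) = (s, a) then
          pathProb p0 p π (t + 1) (Fin.snoc w x) else 0)
        = if x = (s, a) then
            pathProb p0 p π t w * π (t + 1) w x.1 x.2 * p (w (Fin.last t)) x.1 else 0 := by
    intro x
    rw [Fin.snoc_last, pathProb_snoc]
  rw [Finset.sum_congr rfl (fun x _ => h x), Finset.sum_ite_eq']
  simp

/-- one-step state marginal helper -/
lemma sum_qq_p (t : ℕ) (s : S) :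
    ∑ x : S × A, qq p0 p π t x * p x s
      = ∑ w : Fin (t + 1) → S × A, pathProb p0 p π t w * p (w (Fin.last t)) s := by
  unfold qq
  calc ∑ x : S × A,
        (∑ w : Fin (t + 1) → S × A,
          if w (Fin.last t) = x then pathProb p0 p π t w else 0) * p x s
      = ∑ x : S × A, ∑ w : Fin (t + 1) → S × A,
          (if w (Fin.last t) = x then pathProb p0 p π t w * p x s else 0) := by
        refine Finset.sum_congr rfl fun x _ => ?_
        rw [Finset.sum_mul]
        exact Finset.sum_congr rfl fun w _ => by rw [ite_mul, zero_mul]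
    _ = ∑ w : Fin (t + 1) → S × A, ∑ x : S × A,
          (if w (Fin.last t) = x then pathProb p0 p π t w * p x s else 0) :=
        Finset.sum_comm
    _ = ∑ w : Fin (t + 1) → S × A, pathProb p0 p π t w * p (w (Fin.last t)) s := by
        refine Finset.sum_congr rfl fun w _ => ?_
        rw [Finset.sum_ite_eq]
        simp

lemma qq_zero_sum (hπ : ∀ t h s, ∑ a, π t h s a = 1) (s : S) :
    ∑ a, qq p0 p π 0 (s, a) = p0 s := by
  have : ∀ a : A, qq p0 p π 0 (s, a) = p0 s * π 0 (fun i => i.elim0) s a :=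
    fun a => qq_zero p0 p π (s, a)
  rw [Finset.sum_congr rfl (fun a _ => this a), ← Finset.mul_sum, hπ, mul_one]

lemma qq_succ_sum (hπ : ∀ t h s, ∑ a, π t h s a = 1) (t : ℕ) (s : S) :
    ∑ a, qq p0 p π (t + 1) (s, a) = ∑ x : S × A, qq p0 p π t x * p x s := by
  rw [sum_qq_p]
  calc ∑ a, qq p0 p π (t + 1) (s, a)
      = ∑ a, ∑ w : Fin (t + 1) → S × A,
          pathProb p0 p π t w * π (t + 1) w s a * p (w (Fin.last t)) s := by
        exact Finset.sum_congr rfl fun a _ => qq_succ p0 p π t s a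
    _ = ∑ w : Fin (t + 1) → S × A, ∑ a,
          pathProb p0 p π t w * π (t + 1) w s a * p (w (Fin.last t)) s :=
        Finset.sum_comm
    _ = ∑ w : Fin (t + 1) → S × A, pathProb p0 p π t w * p (w (Fin.last t)) s := by
        refine Finset.sum_congr rfl fun w _ => ?_
        have : ∀ a, pathProb p0 p π t w * π (t + 1) w s a * p (w (Fin.last t)) s
            = pathProb p0 p π t w * p (w (Fin.last t)) s * π (t + 1) w s a := by
          intro a; ring
        rw [Finset.sum_congr rfl (fun a _ => this a), ← Finset.mul_sum, hπ, mul_one]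

lemma qq_total (hp0 : ∑ s, p0 s = 1) (hp : ∀ x, ∑ s', p x s' = 1)
    (hπ : ∀ t h s, ∑ a, π t h s a = 1) (t : ℕ) :
    ∑ x : S × A, qq p0 p π t x = 1 := by
  induction t with
  | zero =>
      rw [Fintype.sum_prod_type]
      calc ∑ s, ∑ a, qq p0 p π 0 (s, a) = ∑ s, p0 s :=
            Finset.sum_congr rfl fun s _ => qq_zero_sum p0 p π hπ s
        _ = 1 := hp0
  | succ t ih =>
      rw [Fintype.sum_prod_type]
      calc ∑ s, ∑ a, qq p0 p π (t + 1) (s, a)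
          = ∑ s, ∑ x : S × A, qq p0 p π t x * p x s :=
            Finset.sum_congr rfl fun s _ => qq_succ_sum p0 p π hπ t s
        _ = ∑ x : S × A, qq p0 p π t x * ∑ s, p x s := by
            rw [Finset.sum_comm]
            exact Finset.sum_congr rfl fun x _ => (Finset.mul_sum _ _ _).symm
        _ = ∑ x : S × A, qq p0 p π t x := by
            exact Finset.sum_congr rfl fun x _ => by rw [hp, mul_one]
        _ = 1 := ih

lemma qq_markov (tπ : S → A → ℝ≥0∞) (htπ1 : ∀ s, ∑ a, tπ s a = 1) (t : ℕ) (s : S) (a : A) :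
    qq p0 p (liftMk tπ) t (s, a) = tπ s a * ∑ b, qq p0 p (liftMk tπ) t (s, b) := by
  cases t with
  | zero =>
      rw [qq_zero, qq_zero_sum p0 p (liftMk tπ) (fun _ _ s => htπ1 s) s]
      show p0 s * tπ s a = tπ s a * p0 s
      ring
  | succ t =>
      rw [qq_succ, qq_succ_sum p0 p (liftMk tπ) (fun _ _ s => htπ1 s) t s, sum_qq_p,
        Finset.mul_sum]
      simp only [liftMk]
      exact Finset.sum_congr rfl fun w _ => by ring

end qq

section occl
variable {S A : Type*} [Fintype S] [Fintype A] [DecidableEq S] [DecidableEq A]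
variable (γ : ℝ≥0∞) (p0 : S → ℝ≥0∞) (p : S × A → S → ℝ≥0∞)
  (π : (t : ℕ) → (Fin t → S × A) → S → A → ℝ≥0∞)

lemma occ_total (hp0 : ∑ s, p0 s = 1) (hp : ∀ x, ∑ s', p x s' = 1)
    (hπ : ∀ t h s, ∑ a, π t h s a = 1) :
    ∑ x : S × A, occ γ p0 p π x.1 x.2 = (1 - γ)⁻¹ := by
  calc ∑ x : S × A, occ γ p0 p π x.1 x.2
      = ∑ x : S × A, ∑' t : ℕ, γ ^ t * qq p0 p π t x := by
        exact Finset.sum_congr rfl fun x _ => occ_eq_tsum p0 p π γ x.1 x.2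
    _ = ∑' t : ℕ, ∑ x : S × A, γ ^ t * qq p0 p π t x :=
        (Summable.tsum_finsetSum fun _ _ => ENNReal.summable).symm
    _ = ∑' t : ℕ, γ ^ t := by
        refine tsum_congr fun t => ?_
        rw [← Finset.mul_sum, qq_total p0 p π hp0 hp hπ, mul_one]
    _ = (1 - γ)⁻¹ := ENNReal.tsum_geometric γ

lemma occ_total_ne_top (hγ : γ < 1) (hp0 : ∑ s, p0 s = 1) (hp : ∀ x, ∑ s', p x s' = 1)
    (hπ : ∀ t h s, ∑ a, π t h s a = 1) :
    ∑ x : S × A, occ γ p0 p π x.1 x.2 ≠ ⊤ := by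
  rw [occ_total γ p0 p π hp0 hp hπ]
  refine ENNReal.inv_ne_top.2 ?_
  simp only [ne_eq, tsub_eq_zero_iff_le]
  exact fun h => absurd hγ (not_lt.2 h)

lemma occ_flow (hπ : ∀ t h s, ∑ a, π t h s a = 1) (s : S) :
    ∑ a, occ γ p0 p π s a
      = p0 s + γ * ∑ x : S × A, occ γ p0 p π x.1 x.2 * p x s := by
  calc ∑ a, occ γ p0 p π s a
      = ∑ a, ∑' t : ℕ, γ ^ t * qq p0 p π t (s, a) :=
        Finset.sum_congr rfl fun a _ => occ_eq_tsum p0 p π γ s a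
    _ = ∑' t : ℕ, ∑ a, γ ^ t * qq p0 p π t (s, a) :=
        (Summable.tsum_finsetSum fun _ _ => ENNReal.summable).symm
    _ = ∑' t : ℕ, γ ^ t * ∑ a, qq p0 p π t (s, a) := by
        refine tsum_congr fun t => (Finset.mul_sum _ _ _).symm
    _ = γ ^ 0 * ∑ a, qq p0 p π 0 (s, a)
        + ∑' t : ℕ, γ ^ (t + 1) * ∑ a, qq p0 p π (t + 1) (s, a) :=
        tsum_eq_zero_add' ENNReal.summable
    _ = p0 s + γ * ∑ x : S × A, occ γ p0 p π x.1 x.2 * p x s := by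
        rw [pow_zero, one_mul, qq_zero_sum p0 p π hπ s]
        congr 1
        calc ∑' t : ℕ, γ ^ (t + 1) * ∑ a, qq p0 p π (t + 1) (s, a)
            = ∑' t : ℕ, γ * (γ ^ t * ∑ x : S × A, qq p0 p π t x * p x s) := by
              refine tsum_congr fun t => ?_
              rw [qq_succ_sum p0 p π hπ t s, pow_succ]
              ring
          _ = γ * ∑' t : ℕ, ∑ x : S × A, γ ^ t * qq p0 p π t x * p x s := by
              rw [ENNReal.tsum_mul_left]
              congr 1
              refine tsum_congr fun t => ?_
              rw [Finset.mul_sum]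
              exact Finset.sum_congr rfl fun x _ => by ring
          _ = γ * ∑ x : S × A, occ γ p0 p π x.1 x.2 * p x s := by
              congr 1
              rw [Summable.tsum_finsetSum fun _ _ => ENNReal.summable]
              refine Finset.sum_congr rfl fun x _ => ?_
              rw [occ_eq_tsum, ← ENNReal.tsum_mul_right]

lemma occ_markov_fact (tπ : S → A → ℝ≥0∞) (htπ1 : ∀ s, ∑ a, tπ s a = 1) (s : S) (a : A) :
    occ γ p0 p (liftMk tπ) s a = tπ s a * ∑ b, occ γ p0 p (liftMk tπ) s b := by
  calc occ γ p0 p (liftMk tπ) s a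
      = ∑' t : ℕ, γ ^ t * qq p0 p (liftMk tπ) t (s, a) := rfl
    _ = ∑' t : ℕ, tπ s a * (γ ^ t * ∑ b, qq p0 p (liftMk tπ) t (s, b)) := by
        refine tsum_congr fun t => ?_
        rw [qq_markov p0 p tπ htπ1 t s a]
        ring
    _ = tπ s a * ∑' t : ℕ, ∑ b, γ ^ t * qq p0 p (liftMk tπ) t (s, b) := by
        rw [ENNReal.tsum_mul_left]
        congr 1
        exact tsum_congr fun t => Finset.mul_sum _ _ _
    _ = tπ s a * ∑ b, occ γ p0 p (liftMk tπ) s b := by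
        congr 1
        rw [Summable.tsum_finsetSum fun _ _ => ENNReal.summable]
        exact Finset.sum_congr rfl fun b _ => (occ_eq_tsum p0 p (liftMk tπ) γ s b).symm

end occl

section fixpt
variable {S : Type*} [Fintype S]

/-- the transition operator of a Markov chain kernel `K` -/
noncomputable def Tk (K : S → S → ℝ≥0∞) (h : S → ℝ≥0∞) (s : S) : ℝ≥0∞ :=
  ∑ s', h s' * K s' s

lemma Tk_mass (K : S → S → ℝ≥0∞) (hK : ∀ s', ∑ s, K s' s = 1) (h : S → ℝ≥0∞) :
    ∑ s, Tk K h s = ∑ s, h s := by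
  unfold Tk
  rw [Finset.sum_comm]
  exact Finset.sum_congr rfl fun s' _ => by rw [← Finset.mul_sum, hK, mul_one]

lemma Tk_iter_mass (K : S → S → ℝ≥0∞) (hK : ∀ s', ∑ s, K s' s = 1) (h : S → ℝ≥0∞) (n : ℕ) :
    ∑ s, (Tk K)^[n] h s = ∑ s, h s := by
  induction n with
  | zero => rfl
  | succ n ih =>
      calc ∑ s, (Tk K)^[n + 1] h s = ∑ s, Tk K ((Tk K)^[n] h) s := by
            refine Finset.sum_congr rfl fun s _ => ?_
            rw [Function.iterate_succ_apply']
        _ = ∑ s, (Tk K)^[n] h s := Tk_mass K hK _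
        _ = ∑ s, h s := ih

lemma Tk_add_smul (K : S → S → ℝ≥0∞) (γ : ℝ≥0∞) (g h : S → ℝ≥0∞) :
    Tk K (fun s => g s + γ * h s) = fun s => Tk K g s + γ * Tk K h s := by
  funext s
  unfold Tk
  rw [Finset.mul_sum, ← Finset.sum_add_distrib]
  refine Finset.sum_congr rfl fun s' _ => ?_
  ring

lemma fix_unroll (γ : ℝ≥0∞) (p0 : S → ℝ≥0∞) (K : S → S → ℝ≥0∞) (f : S → ℝ≥0∞)
    (hf : ∀ s, f s = p0 s + γ * Tk K f s) (n : ℕ) :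
    ∀ s, (Tk K)^[n] f s = (Tk K)^[n] p0 s + γ * (Tk K)^[n + 1] f s := by
  induction n with
  | zero => exact fun s => hf s
  | succ n ih =>
      intro s
      rw [Function.iterate_succ_apply' (Tk K) n f, funext ih, Tk_add_smul,
        ← Function.iterate_succ_apply' (Tk K) n p0,
        ← Function.iterate_succ_apply' (Tk K) (n + 1) f]

lemma fix_partial (γ : ℝ≥0∞) (p0 : S → ℝ≥0∞) (K : S → S → ℝ≥0∞) (f : S → ℝ≥0∞)
    (hf : ∀ s, f s = p0 s + γ * Tk K f s) (n : ℕ) (s : S) :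
    f s = (∑ k ∈ Finset.range n, γ ^ k * (Tk K)^[k] p0 s) + γ ^ n * (Tk K)^[n] f s := by
  induction n with
  | zero => simp
  | succ n ih =>
      rw [ih, fix_unroll γ p0 K f hf n s, Finset.sum_range_succ, pow_succ]
      ring

lemma fix_eq_tsum (γ : ℝ≥0∞) (hγ : γ < 1) (p0 : S → ℝ≥0∞) (K : S → S → ℝ≥0∞)
    (hK : ∀ s', ∑ s, K s' s = 1) (f : S → ℝ≥0∞) (hftop : ∑ s, f s ≠ ⊤)
    (hf : ∀ s, f s = p0 s + γ * Tk K f s) (s : S) :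
    f s = ∑' n : ℕ, γ ^ n * (Tk K)^[n] p0 s := by
  set L := ∑' n : ℕ, γ ^ n * (Tk K)^[n] p0 s with hL
  set M := ∑ s, f s with hM
  have hbound : ∀ n, (Tk K)^[n] f s ≤ M := by
    intro n
    calc (Tk K)^[n] f s ≤ ∑ s, (Tk K)^[n] f s :=
        Finset.single_le_sum (fun i _ => zero_le) (Finset.mem_univ s)
      _ = M := Tk_iter_mass K hK f n
  have hge : L ≤ f s := by
    rw [hL, ENNReal.tsum_eq_iSup_nat]
    refine iSup_le fun n => ?_
    rw [fix_partial γ p0 K f hf n s]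
    exact le_self_add
  have hle : f s ≤ L := by
    have htend : Filter.Tendsto (fun n : ℕ => L + γ ^ n * M) Filter.atTop (nhds L) := by
      have h1 : Filter.Tendsto (fun n : ℕ => γ ^ n * M) Filter.atTop (nhds 0) := by
        have := ENNReal.Tendsto.mul_const
          (ENNReal.tendsto_pow_atTop_nhds_zero_of_lt_one hγ) (b := M) (Or.inr hftop)
        simpa using this
      simpa using Filter.Tendsto.add (tendsto_const_nhds (x := L)) h1
    refine le_of_tendsto_of_tendsto' (tendsto_const_nhds (x := f s)) htend fun n => ?_
    rw [fix_partial γ p0 K f hf n s]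
    exact add_le_add (ENNReal.sum_le_tsum _) (mul_le_mul_right (hbound n) _)
  exact le_antisymm hle hge

end fixpt


theorem occupancy_equivalence_finite {S A : Type*}
    [Fintype S] [Fintype A] [DecidableEq S] [DecidableEq A]
    (γ : ℝ≥0∞) (hγ : γ < 1)
    (p0 : S → ℝ≥0∞) (hp0 : ∑ s, p0 s = 1)
    (p : S × A → S → ℝ≥0∞) (hp : ∀ x, ∑ s', p x s' = 1)
    (π : (t : ℕ) → (Fin t → S × A) → S → A → ℝ≥0∞)
    (hπ : ∀ t h s, ∑ a, π t h s a = 1)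
    (tπ : S → A → ℝ≥0∞)
    (htπ : ∀ s a, (∑ b, occ γ p0 p π s b) ≠ 0 →
      tπ s a = occ γ p0 p π s a / (∑ b, occ γ p0 p π s b))
    (htπ1 : ∀ s, ∑ a, tπ s a = 1) :
    ∀ s a, occ γ p0 p (liftMk tπ) s a = occ γ p0 p π s a := by
  have hliftπ : ∀ (t : ℕ) (h : Fin t → S × A) (s : S), ∑ a, liftMk tπ t h s a = 1 :=
    fun _ _ s => htπ1 s
  set F : S → ℝ≥0∞ := fun s => ∑ b, occ γ p0 p π s b with hF
  set G : S → ℝ≥0∞ := fun s => ∑ b, occ γ p0 p (liftMk tπ) s b with hG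
  set K : S → S → ℝ≥0∞ := fun s' s => ∑ b, tπ s' b * p (s', b) s with hKdef
  have hK : ∀ s', ∑ s, K s' s = 1 := by
    intro s'
    rw [hKdef]
    rw [Finset.sum_comm]
    calc ∑ b, ∑ s, tπ s' b * p (s', b) s = ∑ b, tπ s' b * ∑ s, p (s', b) s :=
          Finset.sum_congr rfl fun b _ => (Finset.mul_sum _ _ _).symm
      _ = ∑ b, tπ s' b := Finset.sum_congr rfl fun b _ => by rw [hp, mul_one]
      _ = 1 := htπ1 s'
  -- sums of F and G over states are the total occupancies
  have hFsum : ∑ s, F s = ∑ x : S × A, occ γ p0 p π x.1 x.2 := by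
    rw [Fintype.sum_prod_type]
  have hGsum : ∑ s, G s = ∑ x : S × A, occ γ p0 p (liftMk tπ) x.1 x.2 := by
    rw [Fintype.sum_prod_type]
  have hFtop : ∑ s, F s ≠ ⊤ := by
    rw [hFsum]; exact occ_total_ne_top γ p0 p π hγ hp0 hp hπ
  have hGtop : ∑ s, G s ≠ ⊤ := by
    rw [hGsum]; exact occ_total_ne_top γ p0 p (liftMk tπ) hγ hp0 hp hliftπ
  -- factorization of occupancies through tπ
  have hfactπ : ∀ s b, occ γ p0 p π s b = tπ s b * F s := by
    intro s b
    by_cases h0 : F s = 0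
    · have hle : occ γ p0 p π s b ≤ F s :=
        Finset.single_le_sum (fun i _ => zero_le) (Finset.mem_univ b)
      rw [h0] at hle
      rw [h0, mul_zero]
      exact le_antisymm hle zero_le
    · have hFs_top : F s ≠ ⊤ := by
        intro hc
        apply hFtop
        have : F s ≤ ∑ s, F s :=
          Finset.single_le_sum (fun i _ => zero_le) (Finset.mem_univ s)
        rw [hc] at this
        exact top_le_iff.mp this
      rw [htπ s b h0, ENNReal.div_mul_cancel h0 hFs_top]
  have hfactm : ∀ s b, occ γ p0 p (liftMk tπ) s b = tπ s b * G s :=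
    fun s b => occ_markov_fact γ p0 p tπ htπ1 s b
  -- both F and G satisfy the same fixed-point equation
  have hsumK : ∀ (H : S → ℝ≥0∞) (s : S),
      ∑ x : S × A, (tπ x.1 x.2 * H x.1) * p x s = Tk K H s := by
    intro H s
    rw [Fintype.sum_prod_type]
    unfold Tk
    rw [hKdef]
    refine Finset.sum_congr rfl fun s' _ => ?_
    rw [Finset.mul_sum]
    exact Finset.sum_congr rfl fun b _ => by ring
  have hFfix : ∀ s, F s = p0 s + γ * Tk K F s := by
    intro s
    calc F s = p0 s + γ * ∑ x : S × A, occ γ p0 p π x.1 x.2 * p x s :=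
          occ_flow γ p0 p π hπ s
      _ = p0 s + γ * Tk K F s := by
          rw [← hsumK F s]
          congr 2
          exact Finset.sum_congr rfl fun x _ => by rw [hfactπ x.1 x.2]
  have hGfix : ∀ s, G s = p0 s + γ * Tk K G s := by
    intro s
    calc G s = p0 s + γ * ∑ x : S × A, occ γ p0 p (liftMk tπ) x.1 x.2 * p x s :=
          occ_flow γ p0 p (liftMk tπ) hliftπ s
      _ = p0 s + γ * Tk K G s := by
          rw [← hsumK G s]
          congr 2
          exact Finset.sum_congr rfl fun x _ => by rw [hfactm x.1 x.2]
  have hFG : ∀ s, F s = G s := by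
    intro s
    rw [fix_eq_tsum γ hγ p0 K hK F hFtop hFfix s,
      fix_eq_tsum γ hγ p0 K hK G hGtop hGfix s]
  intro s a
  rw [hfactm s a, hfactπ s a, hFG s]
end

section
/- In the single-state MDP where a1 loops and a2 terminates with γ = 1, the non-Markovian policy that plays a1 deterministically for t in [2^i, 2^{i+1}) when i is even and a2 when i is odd has μ_1^π(s,a1) = μ_1^π(s,a2) = ∞, and the ratio of partial action counts (∑_{t≤T} 1(A_t=a1))/(T+1) does not converge as T → ∞. -/
open scoped ENNReal

/-!
Undiscounted single-state MDP where both actions `a1` and `a2` loop back to `s`.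
The deterministic non-Markovian policy plays, for `t ∈ [2^i, 2^{i+1})`, action
`a1` if the epoch index `i` is even and `a2` if `i` is odd (encoded by
`act : ℕ → Bool`, `act t = true` meaning `a1`). Its occupancies of `(s,a1)` and
`(s,a2)` are both infinite, and the fraction of timesteps up to `T` at which
`a1` was played does not converge as `T → ∞`, so the Radon–Nikodym ratio
defining `π̃` is undetermined.
-/

theorem sigma_infinite_undetermined_projection (act : ℕ → Bool)
    (hact : ∀ i t : ℕ, 2 ^ i ≤ t → t < 2 ^ (i + 1) → act t = decide (i % 2 = 0)) :
    (∑' t : ℕ, if act t then (1 : ℝ≥0∞) else 0) = ⊤ ∧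
    (∑' t : ℕ, if act t then 0 else (1 : ℝ≥0∞)) = ⊤ ∧
    ¬ ∃ L : ℝ, Filter.Tendsto
      (fun T : ℕ =>
        (∑ t ∈ Finset.range (T + 1), if act t then (1 : ℝ) else 0) / (T + 1))
      Filter.atTop (nhds L) := by
  have h4 : ∀ k : ℕ, (2:ℕ)^(2*k) = 4^k := by
    intro k; rw [pow_mul]; norm_num
  have h4pos : ∀ k : ℕ, 0 < (4:ℕ)^k := fun k => pow_pos (by norm_num) k
  have htrue : ∀ k t : ℕ, 4^k ≤ t → t < 2 * 4^k → act t = true := by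
    intro k t h1 h2
    have := hact (2*k) t (by rw [h4]; exact h1) (by rw [pow_succ, h4]; omega)
    simpa [Nat.mul_mod_right] using this
  have hfalse : ∀ k t : ℕ, 2 * 4^k ≤ t → t < 4 * 4^k → act t = false := by
    intro k t h1 h2
    have heq : 2*k+1+1 = 2*(k+1) := by ring
    have h := hact (2*k+1) t (by rw [pow_succ, h4]; omega)
      (by rw [heq, h4, pow_succ]; omega)
    have hm : (2*k+1) % 2 = 1 := by omega
    rw [hm] at h
    simpa using h
  have inf_true : {t : ℕ | act t = true}.Infinite :=
    Set.infinite_of_injective_forall_mem (f := fun k : ℕ => 4^k)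
      (fun a b h => Nat.pow_right_injective (by norm_num : 2 ≤ 4) h)
      (fun k => show act (4^k) = true from
        htrue k _ le_rfl (by have := h4pos k; omega))
  have inf_false : {t : ℕ | act t = false}.Infinite :=
    Set.infinite_of_injective_forall_mem (f := fun k : ℕ => 2 * 4^k)
      (fun a b h => by
        have h' : (4:ℕ)^a = 4^b := by
          have hh : 2 * 4^a = 2 * 4^b := h
          omega
        exact Nat.pow_right_injective (by norm_num : 2 ≤ 4) h')
      (fun k => show act (2 * 4^k) = false from
        hfalse k _ le_rfl (by have := h4pos k; omega))
  have tsum_top : ∀ (g : ℕ → ℝ≥0∞), {t : ℕ | g t = 1}.Infinite → (∑' t, g t) = ⊤ := by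
    intro g hg
    rw [eq_top_iff]
    haveI := hg.to_subtype
    calc (⊤ : ℝ≥0∞) = ∑' _ : {t : ℕ | g t = 1}, (1 : ℝ≥0∞) :=
          (ENNReal.tsum_const_eq_top_of_ne_zero one_ne_zero).symm
      _ = ∑' x : {t : ℕ | g t = 1}, g x := by
          apply tsum_congr; rintro ⟨x, hx⟩; exact hx.symm
      _ = ∑' t, Set.indicator {t : ℕ | g t = 1} g t := tsum_subtype _ _
      _ ≤ ∑' t, g t := ENNReal.tsum_le_tsum fun t =>
          Set.indicator_le_self _ _ _
  refine ⟨?_, ?_, ?_⟩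
  · exact tsum_top _ (inf_true.mono (by intro t ht; simp_all))
  · exact tsum_top _ (inf_false.mono (by intro t ht; simp_all))
  · rintro ⟨L, hL⟩
    set f : ℕ → ℝ := fun t => if act t then (1:ℝ) else 0 with hf
    have f01 : ∀ t, 0 ≤ f t ∧ f t ≤ 1 := by
      intro t; simp only [hf]; split <;> norm_num
    -- lower bound lemma
    have lower : ∀ (N : ℕ) (G : Finset ℕ), G ⊆ Finset.range N →
        (∀ t ∈ G, act t = true) → (G.card : ℝ) ≤ ∑ t ∈ Finset.range N, f t := by
      intro N G hsub hG
      rw [← Finset.sum_sdiff hsub]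
      have h1 : ∑ t ∈ G, f t = G.card := by
        rw [Finset.sum_congr rfl (g := fun _ => (1:ℝ)) (fun t ht => by simp [hf, hG t ht])]
        simp
      have h2 : (0:ℝ) ≤ ∑ t ∈ Finset.range N \ G, f t :=
        Finset.sum_nonneg fun t _ => (f01 t).1
      linarith
    have upper : ∀ (N : ℕ) (G : Finset ℕ), G ⊆ Finset.range N →
        (∀ t ∈ G, act t = false) →
        ∑ t ∈ Finset.range N, f t ≤ (N : ℝ) - G.card := by
      intro N G hsub hG
      rw [← Finset.sum_sdiff hsub]
      have h1 : ∑ t ∈ G, f t = 0 := by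
        rw [Finset.sum_congr rfl (g := fun _ => (0:ℝ)) (fun t ht => by simp [hf, hG t ht])]
        simp
      have h2 : ∑ t ∈ Finset.range N \ G, f t ≤ ((Finset.range N \ G).card : ℝ) := by
        calc ∑ t ∈ Finset.range N \ G, f t ≤ ∑ t ∈ Finset.range N \ G, (1:ℝ) :=
              Finset.sum_le_sum fun t _ => (f01 t).2
          _ = _ := by simp
      have h3 : (Finset.range N \ G).card = N - G.card := by
        rw [Finset.card_sdiff_of_subset hsub, Finset.card_range]
      have h4 : G.card ≤ N := by
        calc G.card ≤ (Finset.range N).card := Finset.card_le_card hsub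
          _ = N := Finset.card_range N
      rw [h3] at h2
      rw [Nat.cast_sub h4] at h2
      linarith
    -- subsequence a k = 2*4^k - 1, value ≥ 1/2
    have hge : (1/2 : ℝ) ≤ L := by
      have hsub : Filter.Tendsto
          (fun k : ℕ => (∑ t ∈ Finset.range ((2*4^k - 1) + 1), f t) / ((2*4^k - 1 : ℕ) + 1))
          Filter.atTop (nhds L) := by
        apply hL.comp
        apply Filter.tendsto_atTop_mono (f := fun k : ℕ => k)
        · intro k
          have h1 : k < 4^k := Nat.lt_pow_self (by norm_num : 1 < 4)
          omega
        · exact Filter.tendsto_id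
      apply ge_of_tendsto' hsub
      intro k
      have hN : (2*4^k - 1) + 1 = 2*4^k := by have := h4pos k; omega
      rw [hN]
      have hcast : ((2*4^k - 1 : ℕ) : ℝ) + 1 = (2*4^k : ℕ) := by
        rw [← Nat.cast_add_one, hN]
      rw [hcast]
      have hG : ∀ t ∈ Finset.Ico (4^k) (2*4^k), act t = true := by
        intro t ht
        rw [Finset.mem_Ico] at ht
        exact htrue k t ht.1 ht.2
      have hsubG : Finset.Ico (4^k) (2*4^k) ⊆ Finset.range (2*4^k) := by
        intro t ht; rw [Finset.mem_Ico] at ht; rw [Finset.mem_range]; exact ht.2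
      have hlb := lower (2*4^k) _ hsubG hG
      rw [Nat.card_Ico] at hlb
      have hcard : ((2*4^k - 4^k : ℕ) : ℝ) = (4^k : ℕ) := by
        congr 1; omega
      rw [hcard] at hlb
      have hpos : (0:ℝ) < ((2*4^k : ℕ) : ℝ) := by
        have := h4pos k; positivity
      rw [le_div_iff₀ hpos]
      push_cast at hlb ⊢
      nlinarith
    -- subsequence b k with N = 4^(k+2), value ≤ 3/8
    have hle : L ≤ (3/8 : ℝ) := by
      have hsub : Filter.Tendsto
          (fun k : ℕ => (∑ t ∈ Finset.range ((4^(k+2) - 1) + 1), f t) / ((4^(k+2) - 1 : ℕ) + 1))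
          Filter.atTop (nhds L) := by
        apply hL.comp
        apply Filter.tendsto_atTop_mono (f := fun k : ℕ => k)
        · intro k
          have h1 : k < 4^k := Nat.lt_pow_self (by norm_num : 1 < 4)
          have h2 : (4:ℕ)^k ≤ 4^(k+2) := Nat.pow_le_pow_right (by norm_num) (by omega)
          omega
        · exact Filter.tendsto_id
      apply le_of_tendsto' hsub
      intro k
      have hN : (4^(k+2) - 1) + 1 = 4^(k+2) := by have := h4pos (k+2); omega
      rw [hN]
      have hcast : ((4^(k+2) - 1 : ℕ) : ℝ) + 1 = (4^(k+2) : ℕ) := by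
        rw [← Nat.cast_add_one, hN]
      rw [hcast]
      set G : Finset ℕ := Finset.Ico (2*4^k) (4*4^k) ∪ Finset.Ico (2*4^(k+1)) (4*4^(k+1)) with hGdef
      have hp : (4:ℕ)^(k+2) = 16 * 4^k := by ring
      have hp1 : (4:ℕ)^(k+1) = 4 * 4^k := by ring
      have hGsub : G ⊆ Finset.range (4^(k+2)) := by
        intro t ht
        rw [hGdef, Finset.mem_union, Finset.mem_Ico, Finset.mem_Ico] at ht
        rw [Finset.mem_range, hp]
        rcases ht with h | h
        · omega
        · rw [hp1] at h; omega
      have hGfalse : ∀ t ∈ G, act t = false := by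
        intro t ht
        rw [hGdef, Finset.mem_union, Finset.mem_Ico, Finset.mem_Ico] at ht
        rcases ht with h | h
        · exact hfalse k t h.1 h.2
        · exact hfalse (k+1) t h.1 h.2
      have hdisj : Disjoint (Finset.Ico (2*4^k) (4*4^k)) (Finset.Ico (2*4^(k+1)) (4*4^(k+1))) := by
        rw [Finset.disjoint_left]
        intro t ht1 ht2
        rw [Finset.mem_Ico] at ht1 ht2
        rw [hp1] at ht2
        omega
      have hcard : G.card = 10 * 4^k := by
        rw [hGdef, Finset.card_union_of_disjoint hdisj, Nat.card_Ico, Nat.card_Ico, hp1]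
        have := h4pos k
        omega
      have hub := upper (4^(k+2)) G hGsub hGfalse
      rw [hcard] at hub
      have hpos : (0:ℝ) < ((4^(k+2) : ℕ) : ℝ) := by
        have := h4pos (k+2); positivity
      rw [div_le_iff₀ hpos]
      rw [hp] at hub ⊢
      push_cast at hub ⊢
      nlinarith
    linarith
end

section
/- Consider the deterministic MDP with S = [0,2], s_0 = 0, A = (0,1], transition s → s+a, termination when s+a > 2, and γ = 1. The non-Markovian policy π that samples A_0 uniformly on (0,1] at t=0 and plays a_t = 1/t − 1/(t+1) for t > 0 has a σ-infinite occupancy measure: for any interval [b+1, c+1] with 0 ≤ b < c ≤ 1, μ_1^π([b+1, c+1]) = ∞. -/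
open MeasureTheory
open scoped ENNReal

/-!
Deterministic continuous MDP on `S = [0,2]` with actions in `(0,1]`: taking
action `a` in state `s` moves to `s + a` (termination when `s + a > 2`), `γ = 1`.
The non-Markovian policy samples `A₀` uniformly on `(0,1]` and plays
`aₜ = 1/t − 1/(t+1)` for `t > 0`, so that `S₀ = 0` and `Sₜ = A₀ + 1 − 1/t` for
`t ≥ 1` (the trajectory never terminates, converging to `A₀ + 1 ≤ 2`). Its
occupancy measure `μ₁^π(σ) = E_{A₀}[∑ₜ 1(Sₜ ∈ σ)]` is σ-infinite: every
interval `[b+1, c+1]` with `0 ≤ b < c ≤ 1` has infinite occupancy.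
-/

/-- The state at time `t` given the initial action `a`. -/
noncomputable def traj12 (a : ℝ) (t : ℕ) : ℝ :=
  if t = 0 then 0 else a + 1 - 1 / (t : ℝ)

/-- Occupancy measure of the policy: expectation over `A₀ ~ U((0,1])` of the
number of visits to `σ`. -/
noncomputable def occ12 (σ : Set ℝ) : ℝ≥0∞ :=
  ∫⁻ a in Set.Ioc (0 : ℝ) 1,
    ∑' t : ℕ, σ.indicator (fun _ => (1 : ℝ≥0∞)) (traj12 a t) ∂volume

/-!
For `a ∈ (b, c]` the states `Sₜ = a + 1 - 1/t` increase to `a + 1 ∈ (b + 1, c + 1]`, so the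
trajectory visits `[b + 1, c + 1]` infinitely often and the visit count is `∞`. Integrating `∞`
over the set `(b, c]` of positive measure gives infinite occupancy.
-/

open Filter Topology Set

lemma ENNReal.tsum_indicator_one_eq_top_of_infinite_preimage {ι α : Type*} {x : ι → α}
    {s : Set α} (hs : (x ⁻¹' s).Infinite) :
    ∑' t, s.indicator (fun _ => (1 : ℝ≥0∞)) (x t) = ⊤ := by
  rw [← ENat.toENNReal_top, ← hs.encard_eq, ← ENNReal.tsum_set_one,
    tsum_subtype (x ⁻¹' s) (fun _ => 1)]
  rfl

lemma tendsto_traj12 (a : ℝ) : Tendsto (traj12 a) atTop (𝓝 (a + 1)) := by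
  have hdiv := (tendsto_one_div_atTop_nhds_zero_nat (𝕜 := ℝ)).const_sub (a + 1)
  rw [sub_zero] at hdiv
  refine hdiv.congr' ?_
  filter_upwards [eventually_ne_atTop 0] with t ht
  simp [traj12, ht]

lemma eventually_traj12_le (a : ℝ) : ∀ᶠ t in atTop, traj12 a t ≤ a + 1 := by
  filter_upwards [eventually_ne_atTop 0] with t ht
  rw [traj12, if_neg ht]
  have : (0 : ℝ) ≤ 1 / t := by positivity
  linarith

lemma traj12_preimage_Icc_infinite {a b c : ℝ} (hba : b < a) (hac : a ≤ c) :
    (traj12 a ⁻¹' Icc (b + 1) (c + 1)).Infinite := by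
  refine Nat.frequently_atTop_iff_infinite.mp (Eventually.frequently ?_)
  filter_upwards [(tendsto_traj12 a).eventually (lt_mem_nhds (by linarith : b + 1 < a + 1)),
    eventually_traj12_le a] with t hlow hup
  exact ⟨hlow.le, hup.trans (by linarith)⟩

theorem sigma_infinite_occupancy_continuous_mdp :
    ∀ b c : ℝ, 0 ≤ b → b < c → c ≤ 1 →
      occ12 (Set.Icc (b + 1) (c + 1)) = ⊤ := by
  intro b c hb hbc hc
  have hvisits : ∀ a ∈ Ioc b c,
      ∑' t, (Icc (b + 1) (c + 1)).indicator (fun _ => (1 : ℝ≥0∞)) (traj12 a t) = ⊤ :=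
    fun a ha => ENNReal.tsum_indicator_one_eq_top_of_infinite_preimage
      (traj12_preimage_Icc_infinite ha.1 ha.2)
  rw [occ12, eq_top_iff]
  calc ⊤ = ∫⁻ _ in Ioc b c, ⊤ := by simp [hbc]
    _ = ∫⁻ a in Ioc b c, ∑' t, (Icc (b + 1) (c + 1)).indicator (fun _ => 1) (traj12 a t) :=
      (setLIntegral_congr_fun measurableSet_Ioc hvisits).symm
    _ ≤ _ := lintegral_mono_set (Ioc_subset_Ioc hb hc)
end

section
/- In the same continuous MDP (S = [0,2], A = (0,1], s → s+a, termination when s+a > 2, γ = 1), every deterministic policy (Markovian or not) has a σ-finite occupancy measure. -/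
open scoped ENNReal Classical

/-!
The trajectory `sₜ = ∑_{i<t} act i` is strictly increasing, so it visits every state at most
once. Covering `[0,2]` by the singletons `{sₙ}` together with the never-visited remainder,
each piece has occupancy at most `1`.
-/

open Set Function

theorem strictMono_sum_range_of_pos {M : Type*} [AddCommMonoid M] [Preorder M]
    [AddLeftStrictMono M] {f : ℕ → M} (hf : ∀ i, 0 < f i) :
    StrictMono fun n => ∑ i ∈ Finset.range n, f i :=
  strictMono_nat_of_lt_succ fun n => by
    simpa only [Finset.sum_range_succ] using lt_add_of_pos_right _ (hf n)

theorem ENNReal.tsum_ite_one_eq_encard {β : Type*} (p : β → Prop) [DecidablePred p] :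
    ∑' t, (if p t then (1 : ℝ≥0∞) else 0) = {t | p t}.encard := by
  rw [← ENNReal.tsum_set_one, tsum_subtype {t | p t} fun _ => 1]
  simp only [indicator_apply, mem_ofPred_eq]

section RangeCover

variable {α : Type*} (K : Set α) (s : ℕ → α)

def rangeCover : ℕ → Set α
  | 0 => K \ range s
  | n + 1 => K ∩ {s n}

theorem iUnion_rangeCover : ⋃ n, rangeCover K s n = K := by
  rw [← union_iUnion_nat_succ]
  simp only [rangeCover, ← inter_iUnion, iUnion_singleton_eq_range, sdiff_union_inter]

variable {K s}

theorem measurableSet_rangeCover [MeasurableSpace α] [MeasurableSingletonClass α]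
    (hK : MeasurableSet K) : ∀ n, MeasurableSet (rangeCover K s n)
  | 0 => hK.diff (countable_range s).measurableSet
  | _ + 1 => hK.inter (measurableSet_singleton _)

theorem finite_preimage_rangeCover (hs : Injective s) :
    ∀ n, (s ⁻¹' rangeCover K s n).Finite
  | 0 => by simp [rangeCover]
  | n + 1 => ((subsingleton_singleton.preimage hs).anti fun _ ht => ht.2).finite

end RangeCover

theorem deterministic_policy_sigma_finite
    (act : ℕ → ℝ) (hact : ∀ t, act t ∈ Set.Ioc (0 : ℝ) 1) :
    ∃ f : ℕ → Set ℝ,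
      (∀ n, MeasurableSet (f n)) ∧
      (⋃ n, f n) = Set.Icc (0 : ℝ) 2 ∧
      ∀ n, (∑' t : ℕ,
        if (∑ i ∈ Finset.range t, act i) ≤ 2 ∧ (∑ i ∈ Finset.range t, act i) ∈ f n
        then (1 : ℝ≥0∞) else 0) < ⊤ := by
  set s : ℕ → ℝ := fun t => ∑ i ∈ Finset.range t, act i
  have hs : Injective s := (strictMono_sum_range_of_pos fun i => (hact i).1).injective
  refine ⟨rangeCover (Icc 0 2) s, measurableSet_rangeCover measurableSet_Icc,
    iUnion_rangeCover _ _, fun n => ?_⟩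
  rw [ENNReal.tsum_ite_one_eq_encard]
  have hfin : {t | s t ≤ 2 ∧ s t ∈ rangeCover (Icc 0 2) s n}.Finite :=
    (finite_preimage_rangeCover hs n).subset fun _ ht => ht.2
  exact_mod_cast hfin.encard_lt_top
end
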